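/- A completely positive trace-preserving map $\Phi$ is creation-incoherent ($\Phi\Delta = \Delta\Phi\Delta$) if and only if $\Phi^{a,a}_{b,c} = p(b|a)\,\delta_{b,c}$ for all $a,b,c$ (where $p(b|a)\geq 0$, $\sum_b p(b|a)=1$) together with the trace-preservation condition $\sum_a \Phi^{b,d}_{a,a} = \delta_{b,d}$. -/

import Mathlib

open Matrix
open scoped ComplexOrder

noncomputable def deph {ι : Type} [Fintype ι] [DecidableEq ι] :
    Matrix ι ι ℂ →ₗ[ℂ] Matrix ι ι ℂ where
  toFun ρ := Matrix.diagonal fun i => ρ i i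
  map_add' ρ σ := by
    ext i j
    by_cases h : i = j <;> simp [Matrix.diagonal_apply, h]
  map_smul' c ρ := by
    ext i j
    by_cases h : i = j <;> simp [Matrix.diagonal_apply, h]

def IsKrausChannel {ι κ : Type} [Fintype ι] [DecidableEq ι] [Fintype κ] [DecidableEq κ]
    (Φ : Matrix ι ι ℂ →ₗ[ℂ] Matrix κ κ ℂ) : Prop :=
  ∃ (N : ℕ) (K : Fin N → Matrix κ ι ℂ),
    (∀ ρ, Φ ρ = ∑ n, K n * ρ * (K n)ᴴ) ∧ (∑ n, (K n)ᴴ * K n = 1)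

/-- Creation-incoherent: `Φ ∘ Δ = Δ ∘ Φ ∘ Δ`. -/
def IsCI {ι κ : Type} [Fintype ι] [DecidableEq ι] [Fintype κ] [DecidableEq κ]
    (Φ : Matrix ι ι ℂ →ₗ[ℂ] Matrix κ κ ℂ) : Prop :=
  LinearMap.comp Φ deph = LinearMap.comp deph (LinearMap.comp Φ deph)

/-!
Total dephasing is `Δ ρ = ∑ₐ ρₐₐ |a⟩⟨a|`, so `Φ ∘ Δ = Δ ∘ Φ ∘ Δ` holds iff every `Φ |a⟩⟨a|` is
diagonal. The diagonal of `Φ |a⟩⟨a|` is nonnegative because `Φ` preserves positive semidefiniteness,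
and sums to one because `Φ` preserves the trace; these entries are `p(b|a)`. Trace preservation
applied to `|b⟩⟨d|` is the remaining condition.
-/

section Dephasing

variable {ι : Type} [Fintype ι] [DecidableEq ι]

lemma deph_apply (ρ : Matrix ι ι ℂ) : deph ρ = diagonal fun i => ρ i i := rfl

lemma deph_eq_sum_smul_single (ρ : Matrix ι ι ℂ) :
    deph ρ = ∑ a, ρ a a • single a a (1 : ℂ) := by
  simp only [smul_single, smul_eq_mul, mul_one, sum_single_eq_diagonal, deph_apply]

lemma deph_eq_self_iff {ρ : Matrix ι ι ℂ} : deph ρ = ρ ↔ ∀ i j, i ≠ j → ρ i j = 0 := by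
  rw [deph_apply]
  constructor
  · intro h i j hij
    rw [← h, diagonal_apply_ne _ hij]
  · intro h
    ext i j
    by_cases hij : i = j
    · subst hij; simp
    · rw [diagonal_apply_ne _ hij, h i j hij]

lemma deph_single_self (a : ι) : deph (single a a (1 : ℂ)) = single a a 1 := by
  refine deph_eq_self_iff.mpr fun i j hij => single_apply_of_ne _ _ _ _ _ ?_
  rintro ⟨rfl, rfl⟩
  exact hij rfl

lemma isCI_iff_forall_deph_map_single {κ : Type} [Fintype κ] [DecidableEq κ]
    (Φ : Matrix ι ι ℂ →ₗ[ℂ] Matrix κ κ ℂ) :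
    IsCI Φ ↔ ∀ a, deph (Φ (single a a 1)) = Φ (single a a 1) := by
  constructor
  · intro h a
    simpa [deph_single_self] using (LinearMap.congr_fun h (single a a 1)).symm
  · intro h
    refine LinearMap.ext fun ρ => ?_
    simp only [LinearMap.comp_apply, deph_eq_sum_smul_single ρ, map_sum, map_smul, h]

end Dephasing

namespace IsKrausChannel

variable {ι κ : Type} [Fintype ι] [DecidableEq ι] [Fintype κ] [DecidableEq κ]
  {Φ : Matrix ι ι ℂ →ₗ[ℂ] Matrix κ κ ℂ}

lemma trace_map (hΦ : IsKrausChannel Φ) (ρ : Matrix ι ι ℂ) : trace (Φ ρ) = trace ρ := by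
  obtain ⟨N, K, hK, hK1⟩ := hΦ
  calc trace (Φ ρ) = ∑ k, trace ((K k)ᴴ * K k * ρ) := by
        rw [hK, trace_sum]; exact Finset.sum_congr rfl fun k _ => trace_mul_cycle _ _ _
    _ = trace ρ := by rw [← trace_sum, ← Finset.sum_mul, hK1, one_mul]

lemma posSemidef_map (hΦ : IsKrausChannel Φ) {ρ : Matrix ι ι ℂ} (hρ : ρ.PosSemidef) :
    (Φ ρ).PosSemidef := by
  obtain ⟨N, K, hK, -⟩ := hΦ
  rw [hK]
  exact posSemidef_sum _ fun k _ => hρ.mul_mul_conjTranspose_same (K k)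

end IsKrausChannel

lemma posSemidef_single_self_one {ι R : Type*} [DecidableEq ι] [CommRing R] [PartialOrder R]
    [StarRing R] [StarOrderedRing R] (a : ι) : (single a a (1 : R)).PosSemidef := by
  rw [← diagonal_single]
  exact PosSemidef.diagonal (Pi.single_nonneg.mpr zero_le_one)

theorem stmt7 {n m : ℕ}
    (Φ : Matrix (Fin n) (Fin n) ℂ →ₗ[ℂ] Matrix (Fin m) (Fin m) ℂ)
    (hΦ : IsKrausChannel Φ) :
    IsCI Φ ↔
    ((∃ p : Fin m → Fin n → ℝ, (∀ b a, 0 ≤ p b a) ∧ (∀ a, ∑ b, p b a = 1) ∧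
        (∀ (a : Fin n) (b c : Fin m),
          Φ (Matrix.single a a 1) b c = if b = c then (p b a : ℂ) else 0)) ∧
      (∀ b d : Fin n, ∑ a : Fin m, Φ (Matrix.single b d 1) a a
        = if b = d then 1 else 0)) := by
  have hTP (b d : Fin n) : ∑ a, Φ (single b d 1) a a = if b = d then 1 else 0 := by
    rw [show ∑ a, Φ (single b d 1) a a = trace (single b d 1) from hΦ.trace_map _]
    split_ifs with h
    · rw [h, trace_single_eq_same]
    · exact trace_single_eq_of_ne _ _ _ h
  have hdiag (a : Fin n) (b : Fin m) : 0 ≤ Φ (single a a 1) b b :=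
    (hΦ.posSemidef_map (posSemidef_single_self_one a)).diag_nonneg
  simp only [isCI_iff_forall_deph_map_single, deph_eq_self_iff, hTP, implies_true, and_true]
  constructor
  · intro hCI
    refine ⟨fun b a => (Φ (single a a 1) b b).re, fun b a => (Complex.nonneg_iff.mp (hdiag a b)).1,
      fun a => ?_, fun a b c => ?_⟩
    · simpa [trace_single_eq_same] using congrArg Complex.re (hTP a a)
    · split_ifs with h
      · subst h; exact Complex.eq_re_of_ofReal_le (r := 0) (by simpa using hdiag a b)
      · exact hCI a b c h
  · rintro ⟨p, -, -, hp⟩ a b c h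
    rw [hp, if_neg h]
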